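/- arXiv:2206.05551 — 3 statements merged into one kernel-verified Lean document; each statement's English description precedes it below -/
import Mathlib

section
/- Let φ and ψ be dual frames for H with upper bounds B_φ, B_ψ, and let m ∈ ℓ^∞ be contained in the closed disk of center μ ∈ ℂ and radius r ≥ 0 (i.e. |m_n − μ| ≤ r for all n). Then the spectrum of M_{m,φ,ψ} is contained in the closed disk of center μ with radius r · B_φ^{1/2} · B_ψ^{1/2}. -/
/-!
Duality of `φ` and `ψ` says that the multiplier with constant symbol `μ` is `μ • 1`, so `M - μ • 1`
is the multiplier with symbol `m - μ`, whose entries are bounded by `r`. Cauchy–Schwarz together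
with the Bessel bounds gives `‖⟪g, (M - μ • 1) f⟫‖ ≤ r √Bφ √Bψ ‖f‖ ‖g‖`, hence
`‖M - μ • 1‖ ≤ r √Bφ √Bψ`, and every spectral value of `M` lies within `‖M - μ • 1‖` of `μ`.
-/

open scoped InnerProductSpace

-- The factor `‖1‖` avoids `NormOneClass`, which fails for operators on the trivial space.
open Metric in
theorem spectrum.subset_closedBall_norm_sub_mul {𝕜 A : Type*} [NormedField 𝕜] [NormedRing A]
    [NormedAlgebra 𝕜 A] [CompleteSpace A] (a : A) (μ : 𝕜) :
    spectrum 𝕜 a ⊆ closedBall μ (‖a - algebraMap 𝕜 A μ‖ * ‖(1 : A)‖) := by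
  intro z hz
  have hshift : z - μ ∈ spectrum 𝕜 (a - algebraMap 𝕜 A μ) := by
    rw [← spectrum.sub_singleton_eq]
    exact Set.sub_mem_sub hz rfl
  simpa [dist_eq_norm] using spectrum.subset_closedBall_norm_mul _ hshift

theorem Real.exists_hasSum_mul_le_sqrt_mul_sqrt {ι : Type*} {a b : ι → ℝ} {A B : ℝ}
    (ha : ∀ i, 0 ≤ a i) (hb : ∀ i, 0 ≤ b i)
    (hA : HasSum (fun i => a i ^ 2) A) (hB : HasSum (fun i => b i ^ 2) B) :
    ∃ C, HasSum (fun i => a i * b i) C ∧ C ≤ √A * √B := by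
  have hA0 : 0 ≤ A := hA.nonneg fun i => sq_nonneg _
  have hB0 : 0 ≤ B := hB.nonneg fun i => sq_nonneg _
  obtain ⟨C, -, hC, hsum⟩ := Real.inner_le_Lp_mul_Lq_hasSum_of_nonneg .two_two
    (Real.sqrt_nonneg A) (Real.sqrt_nonneg B) ha hb
    (by simpa [Real.rpow_two, Real.sq_sqrt hA0] using hA)
    (by simpa [Real.rpow_two, Real.sq_sqrt hB0] using hB)
  exact ⟨C, hsum, hC⟩

theorem norm_le_of_forall_norm_inner_le {𝕜 E : Type*} [RCLike 𝕜] [NormedAddCommGroup E]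
    [InnerProductSpace 𝕜 E] {x : E} {C : ℝ} (hC : 0 ≤ C) (h : ∀ g : E, ‖⟪g, x⟫_𝕜‖ ≤ C * ‖g‖) :
    ‖x‖ ≤ C := by
  rw [← innerSL_apply_norm 𝕜 x]
  exact ContinuousLinearMap.opNorm_le_bound _ hC fun g => by
    simpa [norm_inner_symm] using h g

section BesselMultiplier

variable (𝕜 : Type*) {H ι : Type*} [RCLike 𝕜] [NormedAddCommGroup H] [InnerProductSpace 𝕜 H]

def IsBesselSeq (φ : ι → H) (B : ℝ) : Prop :=
  ∀ f : H, ∃ s : ℝ, HasSum (fun i => ‖⟪φ i, f⟫_𝕜‖ ^ 2) s ∧ s ≤ B * ‖f‖ ^ 2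

variable {𝕜}

namespace IsBesselSeq

variable {φ ψ : ι → H} {Bφ Bψ : ℝ}

theorem exists_hasSum_sqrt_le (hφ : IsBesselSeq 𝕜 φ Bφ) (f : H) :
    ∃ s : ℝ, HasSum (fun i => ‖⟪φ i, f⟫_𝕜‖ ^ 2) s ∧ √s ≤ √Bφ * ‖f‖ := by
  obtain ⟨s, hs, hsB⟩ := hφ f
  refine ⟨s, hs, ?_⟩
  calc √s ≤ √(Bφ * ‖f‖ ^ 2) := Real.sqrt_le_sqrt hsB
    _ = √Bφ * ‖f‖ := by rw [Real.sqrt_mul' _ (sq_nonneg _), Real.sqrt_sq (norm_nonneg f)]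

theorem norm_inner_le_of_hasSum_multiplier (hφ : IsBesselSeq 𝕜 φ Bφ) (hψ : IsBesselSeq 𝕜 ψ Bψ)
    {c : ι → 𝕜} {r : ℝ} (hr : 0 ≤ r) (hc : ∀ i, ‖c i‖ ≤ r) {f x : H}
    (hx : HasSum (fun i => (c i * ⟪ψ i, f⟫_𝕜) • φ i) x) (g : H) :
    ‖⟪g, x⟫_𝕜‖ ≤ r * √Bφ * √Bψ * ‖f‖ * ‖g‖ := by
  obtain ⟨sψ, hsψ, hsψB⟩ := hψ.exists_hasSum_sqrt_le f
  obtain ⟨sφ, hsφ, hsφB⟩ := hφ.exists_hasSum_sqrt_le g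
  obtain ⟨C, hC, hCle⟩ := Real.exists_hasSum_mul_le_sqrt_mul_sqrt
    (fun _ => norm_nonneg _) (fun _ => norm_nonneg _) hsψ hsφ
  have hinner : HasSum (fun i => c i * ⟪ψ i, f⟫_𝕜 * ⟪g, φ i⟫_𝕜) ⟪g, x⟫_𝕜 := by
    simpa [inner_smul_right, mul_comm] using hx.mapL (innerSL 𝕜 g)
  have hterm : ∀ i, ‖c i * ⟪ψ i, f⟫_𝕜 * ⟪g, φ i⟫_𝕜‖ ≤ r * (‖⟪ψ i, f⟫_𝕜‖ * ‖⟪φ i, g⟫_𝕜‖) := by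
    intro i
    rw [norm_mul, norm_mul, norm_inner_symm g, mul_assoc]
    gcongr
    exact hc i
  calc ‖⟪g, x⟫_𝕜‖ ≤ r * C := hinner.norm_le_of_bounded (hC.mul_left r) hterm
    _ ≤ r * ((√Bψ * ‖f‖) * (√Bφ * ‖g‖)) := by
      gcongr
      exact hCle.trans (mul_le_mul hsψB hsφB (Real.sqrt_nonneg _) (by positivity))
    _ = r * √Bφ * √Bψ * ‖f‖ * ‖g‖ := by ring

theorem norm_le_of_hasSum_multiplier (hφ : IsBesselSeq 𝕜 φ Bφ) (hψ : IsBesselSeq 𝕜 ψ Bψ)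
    {c : ι → 𝕜} {r : ℝ} (hr : 0 ≤ r) (hc : ∀ i, ‖c i‖ ≤ r) {f x : H}
    (hx : HasSum (fun i => (c i * ⟪ψ i, f⟫_𝕜) • φ i) x) :
    ‖x‖ ≤ r * √Bφ * √Bψ * ‖f‖ :=
  norm_le_of_forall_norm_inner_le (by positivity)
    (hφ.norm_inner_le_of_hasSum_multiplier hψ hr hc hx)

theorem opNorm_le_of_hasSum_multiplier (hφ : IsBesselSeq 𝕜 φ Bφ) (hψ : IsBesselSeq 𝕜 ψ Bψ)
    {c : ι → 𝕜} {r : ℝ} (hr : 0 ≤ r) (hc : ∀ i, ‖c i‖ ≤ r) {T : H →L[𝕜] H}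
    (hT : ∀ f, HasSum (fun i => (c i * ⟪ψ i, f⟫_𝕜) • φ i) (T f)) :
    ‖T‖ ≤ r * √Bφ * √Bψ :=
  T.opNorm_le_bound (by positivity) fun f =>
    hφ.norm_le_of_hasSum_multiplier hψ hr hc (hT f)

end IsBesselSeq

theorem hasSum_multiplier_sub_algebraMap {φ ψ : ι → H}
    (hdual : ∀ f : H, HasSum (fun i => ⟪ψ i, f⟫_𝕜 • φ i) f) {m : ι → 𝕜} {T : H →L[𝕜] H}
    (hT : ∀ f, HasSum (fun i => (m i * ⟪ψ i, f⟫_𝕜) • φ i) (T f)) (μ : 𝕜) (f : H) :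
    HasSum (fun i => ((m i - μ) * ⟪ψ i, f⟫_𝕜) • φ i) ((T - algebraMap 𝕜 (H →L[𝕜] H) μ) f) := by
  simpa [sub_mul, sub_smul, mul_smul] using (hT f).sub ((hdual f).const_smul μ)

end BesselMultiplier

theorem spectrum_dual_frames_multiplier_subset_disk_general
    {H : Type*} [NormedAddCommGroup H] [InnerProductSpace ℂ H] [CompleteSpace H]
    (φ ψ : ℕ → H) (Aφ Bφ Aψ Bψ : ℝ)
    (hφ : ∀ f : H, ∃ s : ℝ, HasSum (fun n => ‖⟪φ n, f⟫_ℂ‖ ^ 2) s ∧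
      Aφ * ‖f‖ ^ 2 ≤ s ∧ s ≤ Bφ * ‖f‖ ^ 2)
    (hψ : ∀ f : H, ∃ s : ℝ, HasSum (fun n => ‖⟪ψ n, f⟫_ℂ‖ ^ 2) s ∧
      Aψ * ‖f‖ ^ 2 ≤ s ∧ s ≤ Bψ * ‖f‖ ^ 2)
    (hdual : ∀ f : H, HasSum (fun n => ⟪ψ n, f⟫_ℂ • φ n) f)
    (m : ℕ → ℂ) (mu : ℂ) (r : ℝ) (hr : 0 ≤ r) (hm : ∀ n, ‖m n - mu‖ ≤ r)
    (M : H →L[ℂ] H)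
    (hM : ∀ f : H, HasSum (fun n => (m n * ⟪ψ n, f⟫_ℂ) • φ n) (M f)) :
    spectrum ℂ M ⊆ Metric.closedBall mu (r * Real.sqrt Bφ * Real.sqrt Bψ) := by
  have hφB : IsBesselSeq ℂ φ Bφ := fun f => (hφ f).imp fun _ hs => ⟨hs.1, hs.2.2⟩
  have hψB : IsBesselSeq ℂ ψ Bψ := fun f => (hψ f).imp fun _ hs => ⟨hs.1, hs.2.2⟩
  have hnorm : ‖M - algebraMap ℂ (H →L[ℂ] H) mu‖ ≤ r * √Bφ * √Bψ :=
    hφB.opNorm_le_of_hasSum_multiplier hψB hr hm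
      (hasSum_multiplier_sub_algebraMap hdual hM mu)
  refine (spectrum.subset_closedBall_norm_sub_mul M mu).trans
    (Metric.closedBall_subset_closedBall ?_)
  calc ‖M - algebraMap ℂ (H →L[ℂ] H) mu‖ * ‖(1 : H →L[ℂ] H)‖
      ≤ ‖M - algebraMap ℂ (H →L[ℂ] H) mu‖ :=
        mul_le_of_le_one_right (norm_nonneg _) ContinuousLinearMap.norm_id_le
    _ ≤ r * √Bφ * √Bψ := hnorm

/-- for dual frames, if the symbol lies in the closed disk of center `μ` and
radius `r`, then the spectrum of the multiplier lies in the closed disk of center `μ` and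
radius `r·Bφ^(1/2)·Bψ^(1/2)`. -/
theorem spectrum_dual_frames_multiplier_subset_disk
    {H : Type*} [NormedAddCommGroup H] [InnerProductSpace ℂ H] [CompleteSpace H]
    (φ ψ : ℕ → H) (Aφ Bφ Aψ Bψ : ℝ) (hAφ : 0 < Aφ) (hAψ : 0 < Aψ)
    (hφ : ∀ f : H, ∃ s : ℝ, HasSum (fun n => ‖⟪φ n, f⟫_ℂ‖ ^ 2) s ∧
      Aφ * ‖f‖ ^ 2 ≤ s ∧ s ≤ Bφ * ‖f‖ ^ 2)
    (hψ : ∀ f : H, ∃ s : ℝ, HasSum (fun n => ‖⟪ψ n, f⟫_ℂ‖ ^ 2) s ∧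
      Aψ * ‖f‖ ^ 2 ≤ s ∧ s ≤ Bψ * ‖f‖ ^ 2)
    (hdual : ∀ f : H, HasSum (fun n => ⟪ψ n, f⟫_ℂ • φ n) f)
    (m : ℕ → ℂ) (mu : ℂ) (r : ℝ) (hr : 0 ≤ r) (hm : ∀ n, ‖m n - mu‖ ≤ r)
    (M : H →L[ℂ] H)
    (hM : ∀ f : H, HasSum (fun n => (m n * ⟪ψ n, f⟫_ℂ) • φ n) (M f)) :
    spectrum ℂ M ⊆ Metric.closedBall mu (r * Real.sqrt Bφ * Real.sqrt Bψ) :=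
  spectrum_dual_frames_multiplier_subset_disk_general φ ψ Aφ Bφ Aψ Bψ hφ hψ hdual m mu r hr hm M hM
end

section
/- Let φ, ψ be dual frames for H such that for some I ⊂ ℕ the subfamilies {φ_n : n ∈ I}, {ψ_n : n ∈ I} are Riesz bases for H with lower frame bounds A_{φ,1}, A_{ψ,1}, and let B_{φ,2}, B_{ψ,2} be Bessel bounds of {φ_n : n ∉ I}, {ψ_n : n ∉ I}. Let m ∈ ℓ^∞ and λ ∈ ℂ. If (sup_{n∉I} |m_n − λ|) · B_{φ,2}^{1/2} B_{ψ,2}^{1/2} < (inf_{n∈I} |m_n − λ|) · A_{φ,1}^{1/2} A_{ψ,1}^{1/2}, then λ lies in the resolvent set of M_{m,φ,ψ}. -/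
/-!
Write `w = m - λ`, so that `M - λ = M_{w,φ,ψ}` by duality, and split this multiplier along `I`.
On `I` it factors as `T_φ ∘ D_w ∘ T_ψ*`, where `T_φ, T_ψ : ℓ²(I) ≃ H` are the synthesis
isomorphisms of the Riesz bases (`‖T⁻¹‖ ≤ A^{-1/2}` by the lower Riesz bound) and `D_w` is the
diagonal operator, invertible with `‖D_w⁻¹‖ ≤ (inf_I |w|)⁻¹`. Off `I` it factors through the analysis
and synthesis operators of the Bessel sequences, so its norm is at most
`sup_{∉I} |w| · B_φ^{1/2} B_ψ^{1/2}`. The hypothesis says this is below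
`inf_I |w| · A_φ^{1/2} A_ψ^{1/2}`, the reciprocal of the bound on the inverse of the `I`-part, so
the sum is invertible by a Neumann series.
-/

open scoped InnerProductSpace

/-- `φ` is a Riesz basis with bounds `A ≤ B`: it is complete and the ℓ²-synthesis
inequalities hold. -/
def IsRieszBasisWith {H : Type*} [NormedAddCommGroup H] [InnerProductSpace ℂ H]
    {ι : Type*} (φ : ι → H) (A B : ℝ) : Prop :=
  (Submodule.span ℂ (Set.range φ)).topologicalClosure = ⊤ ∧
  ∀ c : ι → ℂ, Summable (fun n => ‖c n‖ ^ 2) →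
    ∃ s : H, HasSum (fun n => c n • φ n) s ∧
      A * ∑' n, ‖c n‖ ^ 2 ≤ ‖s‖ ^ 2 ∧ ‖s‖ ^ 2 ≤ B * ∑' n, ‖c n‖ ^ 2

/-- `φ` is a Bessel sequence with Bessel bound `B`. -/
def IsBesselWith {H : Type*} [NormedAddCommGroup H] [InnerProductSpace ℂ H]
    {ι : Type*} (φ : ι → H) (B : ℝ) : Prop :=
  ∀ f : H, ∃ s : ℝ, HasSum (fun n => ‖⟪φ n, f⟫_ℂ‖ ^ 2) s ∧ s ≤ B * ‖f‖ ^ 2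

/-- `φ` is a frame with bounds `A, B`. -/
def IsFrameWith {H : Type*} [NormedAddCommGroup H] [InnerProductSpace ℂ H]
    {ι : Type*} (φ : ι → H) (A B : ℝ) : Prop :=
  ∀ f : H, ∃ s : ℝ, HasSum (fun n => ‖⟪φ n, f⟫_ℂ‖ ^ 2) s ∧
    A * ‖f‖ ^ 2 ≤ s ∧ s ≤ B * ‖f‖ ^ 2

open scoped lp

namespace Real

theorem le_sqrt_mul_of_sq_le_mul_sq {x y B : ℝ} (hx : 0 ≤ x) (hy : 0 ≤ y)
    (h : x ^ 2 ≤ B * y ^ 2) : x ≤ √B * y :=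
  calc x = √(x ^ 2) := (sqrt_sq hx).symm
    _ ≤ √(B * y ^ 2) := sqrt_le_sqrt h
    _ = √B * y := by rw [sqrt_mul' B (sq_nonneg y), sqrt_sq hy]

theorem sqrt_mul_le_of_mul_sq_le_sq {x y A : ℝ} (hx : 0 ≤ x) (hy : 0 ≤ y)
    (h : A * x ^ 2 ≤ y ^ 2) : √A * x ≤ y :=
  calc √A * x = √(A * x ^ 2) := by rw [sqrt_mul' A (sq_nonneg x), sqrt_sq hx]
    _ ≤ √(y ^ 2) := sqrt_le_sqrt h
    _ = y := sqrt_sq hy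

end Real

theorem isUnit_add_of_norm_inv_le {R : Type*} [NormedRing R] [HasSummableGeomSeries R]
    (x : Rˣ) {t : R} {K : ℝ} (hK : 0 < K) (hx : ‖(↑x⁻¹ : R)‖ ≤ K⁻¹) (ht : ‖t‖ < K) :
    IsUnit ((x : R) + t) := by
  nontriviality R
  have hKx : K ≤ ‖(↑x⁻¹ : R)‖⁻¹ := (le_inv_comm₀ hK (Units.norm_pos x⁻¹)).mpr hx
  simpa using (x.add t (ht.trans_le hKx)).isUnit

namespace lp

variable {ι : Type*}

section Two

variable {E : Type*} [NormedAddCommGroup E]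

theorem hasSum_norm_sq (c : ℓ²(ι, E)) : HasSum (fun i => ‖c i‖ ^ 2) (‖c‖ ^ 2) := by
  simpa using lp.hasSum_norm (p := 2) (by norm_num) c

theorem memℓp_two_of_summable_sq {c : ι → E} (h : Summable fun i => ‖c i‖ ^ 2) : Memℓp c 2 :=
  memℓp_gen (by simpa using h)

end Two

variable {𝕜 : Type*} [NontriviallyNormedField 𝕜] {p : ENNReal}

theorem memℓp_mul {w : ι → 𝕜} {W : ℝ} (hW : ∀ i, ‖w i‖ ≤ W) (c : ℓ^p(ι, 𝕜)) :
    Memℓp (fun i => w i * c i) p :=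
  ((lp.memℓp c).norm.const_mul W).mono fun i => by
    rw [norm_mul]; exact mul_le_mul_of_nonneg_right (hW i) (norm_nonneg _)

variable [Fact (1 ≤ p)]

theorem norm_mk_mul_le {w : ι → 𝕜} {W : ℝ} (hW : ∀ i, ‖w i‖ ≤ W) (c : ℓ^p(ι, 𝕜)) :
    ‖(⟨fun i => w i * c i, memℓp_mul hW c⟩ : ℓ^p(ι, 𝕜))‖ ≤ |W| * ‖c‖ := by
  have hp : p ≠ 0 := (zero_lt_one.trans_le Fact.out).ne'
  calc _ ≤ ‖W • lp.toNorm c‖ := lp.norm_mono hp fun i => by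
        simp only [coeFn_smul, Pi.smul_apply, toNorm_coe, smul_eq_mul, norm_mul, Real.norm_eq_abs,
          abs_norm]
        exact mul_le_mul_of_nonneg_right ((hW i).trans (le_abs_self W)) (norm_nonneg _)
    _ = |W| * ‖c‖ := by rw [lp.norm_const_smul hp, lp.norm_toNorm, Real.norm_eq_abs]

noncomputable def diagonal (w : ι → 𝕜) (W : ℝ) (hW : ∀ i, ‖w i‖ ≤ W) :
    ℓ^p(ι, 𝕜) →L[𝕜] ℓ^p(ι, 𝕜) :=
  LinearMap.mkContinuous
    { toFun := fun c => ⟨fun i => w i * c i, memℓp_mul hW c⟩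
      map_add' := fun c d => lp.ext <| funext fun i => mul_add (w i) (c i) (d i)
      map_smul' := fun a c => lp.ext <| funext fun i => mul_left_comm (w i) a (c i) }
    |W|
    (norm_mk_mul_le hW)

variable {w : ι → 𝕜} {W : ℝ} {hW : ∀ i, ‖w i‖ ≤ W}

theorem norm_diagonal_le (hW0 : 0 ≤ W) :
    ‖(diagonal w W hW : ℓ^p(ι, 𝕜) →L[𝕜] ℓ^p(ι, 𝕜))‖ ≤ W :=
  (LinearMap.mkContinuous_norm_le _ (abs_nonneg W) _).trans (abs_of_nonneg hW0).le

theorem norm_inv_le_of_forall_le {d : ℝ} (hd : 0 < d) (hwd : ∀ i, d ≤ ‖w i‖) (i : ι) :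
    ‖(w i)⁻¹‖ ≤ d⁻¹ := by
  rw [norm_inv]; exact inv_anti₀ hd (hwd i)

noncomputable def diagonalEquiv (w : ι → 𝕜) (W : ℝ) (hW : ∀ i, ‖w i‖ ≤ W) {d : ℝ} (hd : 0 < d)
    (hwd : ∀ i, d ≤ ‖w i‖) : ℓ^p(ι, 𝕜) ≃L[𝕜] ℓ^p(ι, 𝕜) :=
  have hw0 : ∀ i, w i ≠ 0 := fun i => norm_pos_iff.mp (hd.trans_le (hwd i))
  ContinuousLinearEquiv.equivOfInverse (diagonal w W hW)
    (diagonal (fun i => (w i)⁻¹) d⁻¹ (norm_inv_le_of_forall_le hd hwd))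
    (fun c => lp.ext <| funext fun i => inv_mul_cancel_left₀ (hw0 i) (c i))
    (fun c => lp.ext <| funext fun i => mul_inv_cancel_left₀ (hw0 i) (c i))

@[simp] theorem diagonalEquiv_apply {d : ℝ} (hd : 0 < d) (hwd : ∀ i, d ≤ ‖w i‖)
    (c : ℓ^p(ι, 𝕜)) (i : ι) : diagonalEquiv w W hW hd hwd c i = w i * c i := rfl

theorem norm_diagonalEquiv_symm_le {d : ℝ} (hd : 0 < d) (hwd : ∀ i, d ≤ ‖w i‖) :
    ‖((diagonalEquiv (p := p) w W hW hd hwd).symm :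
      ℓ^p(ι, 𝕜) →L[𝕜] ℓ^p(ι, 𝕜))‖ ≤ d⁻¹ :=
  norm_diagonal_le (hW := norm_inv_le_of_forall_le hd hwd) (inv_nonneg.mpr hd.le)

end lp

namespace ContinuousLinearEquiv

variable {𝕜 E F : Type*} [RCLike 𝕜] [NormedAddCommGroup E] [InnerProductSpace 𝕜 E]
  [NormedAddCommGroup F] [InnerProductSpace 𝕜 F] [CompleteSpace E] [CompleteSpace F]

noncomputable def adjoint (e : E ≃L[𝕜] F) : F ≃L[𝕜] E :=
  equivOfInverse' (ContinuousLinearMap.adjoint (e : E →L[𝕜] F))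
    (ContinuousLinearMap.adjoint (e.symm : F →L[𝕜] E))
    (by rw [← ContinuousLinearMap.adjoint_comp, coe_symm_comp_coe, ContinuousLinearMap.adjoint_id])
    (by rw [← ContinuousLinearMap.adjoint_comp, coe_comp_coe_symm, ContinuousLinearMap.adjoint_id])

@[simp] theorem adjoint_apply (e : E ≃L[𝕜] F) (y : F) :
    e.adjoint y = ContinuousLinearMap.adjoint (e : E →L[𝕜] F) y := rfl

theorem norm_adjoint_symm (e : E ≃L[𝕜] F) :
    ‖(e.adjoint.symm : E →L[𝕜] F)‖ = ‖(e.symm : F →L[𝕜] E)‖ :=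
  LinearIsometryEquiv.norm_map ContinuousLinearMap.adjoint (e.symm : F →L[𝕜] E)

end ContinuousLinearEquiv

section Frames

variable {H ι : Type*} [NormedAddCommGroup H] [InnerProductSpace ℂ H]

namespace IsBesselWith

variable {φ : ι → H} {B : ℝ}

theorem memℓp_inner (h : IsBesselWith φ B) (f : H) : Memℓp (fun n => ⟪φ n, f⟫_ℂ) 2 :=
  let ⟨_, hs, _⟩ := h f
  lp.memℓp_two_of_summable_sq hs.summable

noncomputable def analysis (h : IsBesselWith φ B) : H →L[ℂ] ℓ²(ι, ℂ) :=
  LinearMap.mkContinuous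
    { toFun := fun f => ⟨fun n => ⟪φ n, f⟫_ℂ, h.memℓp_inner f⟩
      map_add' := fun f g => lp.ext <| funext fun n => inner_add_right _ _ _
      map_smul' := fun a f => lp.ext <| funext fun n => inner_smul_right _ _ _ }
    √B fun f => by
      obtain ⟨s, hs, hsB⟩ := h f
      refine Real.le_sqrt_mul_of_sq_le_mul_sq (norm_nonneg _) (norm_nonneg _) ?_
      have := (lp.hasSum_norm_sq (⟨fun n => ⟪φ n, f⟫_ℂ, h.memℓp_inner f⟩ : ℓ²(ι, ℂ))).unique hs
      exact this ▸ hsB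

@[simp] theorem analysis_apply (h : IsBesselWith φ B) (f : H) (n : ι) :
    h.analysis f n = ⟪φ n, f⟫_ℂ := rfl

theorem norm_analysis_le (h : IsBesselWith φ B) : ‖h.analysis‖ ≤ √B :=
  LinearMap.mkContinuous_norm_le _ (Real.sqrt_nonneg B) _

variable [CompleteSpace H]

noncomputable def synthesis (h : IsBesselWith φ B) : ℓ²(ι, ℂ) →L[ℂ] H :=
  ContinuousLinearMap.adjoint h.analysis

theorem norm_synthesis_le (h : IsBesselWith φ B) : ‖h.synthesis‖ ≤ √B :=
  (LinearIsometryEquiv.norm_map _ _).trans_le h.norm_analysis_le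

theorem synthesis_single [DecidableEq ι] (h : IsBesselWith φ B) (n : ι) (z : ℂ) :
    h.synthesis (lp.single 2 n z) = z • φ n :=
  ext_inner_left ℂ fun f => by
    rw [synthesis, ContinuousLinearMap.adjoint_inner_right, lp.inner_single_right, analysis_apply,
      inner_smul_right, RCLike.inner_apply, inner_conj_symm]

theorem hasSum_synthesis (h : IsBesselWith φ B) (c : ℓ²(ι, ℂ)) :
    HasSum (fun n => c n • φ n) (h.synthesis c) := by
  classical
  simpa only [h.synthesis_single] using (lp.hasSum_single ENNReal.ofNat_ne_top c).mapL h.synthesis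

end IsBesselWith

namespace IsRieszBasisWith

variable {φ : ι → H} {A B : ℝ}

theorem exists_hasSum_smul (h : IsRieszBasisWith φ A B) (c : ℓ²(ι, ℂ)) :
    ∃ s, HasSum (fun n => c n • φ n) s ∧ A * ‖c‖ ^ 2 ≤ ‖s‖ ^ 2 ∧ ‖s‖ ^ 2 ≤ B * ‖c‖ ^ 2 := by
  rw [← (lp.hasSum_norm_sq c).tsum_eq]
  exact h.2 c (lp.hasSum_norm_sq c).summable

theorem hasSum_tsum_smul (h : IsRieszBasisWith φ A B) (c : ℓ²(ι, ℂ)) :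
    HasSum (fun n => c n • φ n) (∑' n, c n • φ n) :=
  let ⟨_, hs, _⟩ := h.exists_hasSum_smul c
  hs.summable.hasSum

noncomputable def synthesis (h : IsRieszBasisWith φ A B) : ℓ²(ι, ℂ) →L[ℂ] H :=
  LinearMap.mkContinuous
    { toFun := fun c => ∑' n, c n • φ n
      map_add' := fun c d => by
        simp only [lp.coeFn_add, Pi.add_apply, add_smul]
        exact ((h.hasSum_tsum_smul c).add (h.hasSum_tsum_smul d)).tsum_eq
      map_smul' := fun a c => by
        simp only [lp.coeFn_smul, Pi.smul_apply, smul_eq_mul, mul_smul, RingHom.id_apply]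
        exact ((h.hasSum_tsum_smul c).const_smul a).tsum_eq }
    √B fun c => by
      obtain ⟨s, hs, -, hsB⟩ := h.exists_hasSum_smul c
      rw [LinearMap.coe_mk, AddHom.coe_mk, hs.tsum_eq]
      exact Real.le_sqrt_mul_of_sq_le_mul_sq (norm_nonneg _) (norm_nonneg _) hsB

theorem hasSum_synthesis (h : IsRieszBasisWith φ A B) (c : ℓ²(ι, ℂ)) :
    HasSum (fun n => c n • φ n) (h.synthesis c) :=
  h.hasSum_tsum_smul c

theorem synthesis_single [DecidableEq ι] (h : IsRieszBasisWith φ A B) (n : ι) :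
    h.synthesis (lp.single 2 n 1) = φ n := by
  refine (h.hasSum_synthesis _).unique ?_
  convert hasSum_single n fun k hk => ?_ using 1
  · simp
  · simp [hk]

theorem norm_le_inv_sqrt_mul_norm_synthesis (h : IsRieszBasisWith φ A B) (hA : 0 < A)
    (c : ℓ²(ι, ℂ)) : ‖c‖ ≤ (√A)⁻¹ * ‖h.synthesis c‖ := by
  obtain ⟨s, hs, hAs, -⟩ := h.exists_hasSum_smul c
  rw [le_inv_mul_iff₀ (Real.sqrt_pos.mpr hA), (h.hasSum_synthesis c).unique hs]
  exact Real.sqrt_mul_le_of_mul_sq_le_sq (norm_nonneg _) (norm_nonneg _) hAs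

theorem surjective_synthesis (h : IsRieszBasisWith φ A B) (hA : 0 < A) :
    Function.Surjective h.synthesis := by
  classical
  have hclosed : IsClosed (Set.range h.synthesis) :=
    (h.synthesis.antilipschitz_of_bound (K := (√A)⁻¹.toNNReal) fun c => by
      rw [Real.coe_toNNReal _ (by positivity)]
      exact h.norm_le_inv_sqrt_mul_norm_synthesis hA c).isClosed_range
      h.synthesis.uniformContinuous
  have hspan : (Submodule.span ℂ (Set.range φ) : Set H) ⊆ Set.range h.synthesis := by
    refine (Submodule.span_le (p := LinearMap.range (h.synthesis : ℓ²(ι, ℂ) →ₗ[ℂ] H))).mpr ?_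
    rintro _ ⟨n, rfl⟩
    exact ⟨lp.single 2 n 1, h.synthesis_single n⟩
  have hdense : DenseRange h.synthesis :=
    (Submodule.dense_iff_topologicalClosure_eq_top.mpr h.1).mono hspan
  exact Set.range_eq_univ.mp (hdense.closure_eq ▸ hclosed.closure_eq).symm

variable [CompleteSpace H]

noncomputable def synthesisEquiv (h : IsRieszBasisWith φ A B) (hA : 0 < A) :
    ℓ²(ι, ℂ) ≃L[ℂ] H :=
  ContinuousLinearEquiv.ofBijective h.synthesis
    (LinearMap.ker_eq_bot.mpr fun c d hcd => by
      have hcd : h.synthesis c = h.synthesis d := hcd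
      have := h.norm_le_inv_sqrt_mul_norm_synthesis hA (c - d)
      rwa [map_sub, hcd, sub_self, norm_zero, mul_zero, norm_le_zero_iff, sub_eq_zero] at this)
    (LinearMap.range_eq_top.mpr (h.surjective_synthesis hA))

@[simp] theorem synthesisEquiv_apply (h : IsRieszBasisWith φ A B) (hA : 0 < A) (c : ℓ²(ι, ℂ)) :
    h.synthesisEquiv hA c = h.synthesis c := rfl

theorem norm_synthesisEquiv_symm_le (h : IsRieszBasisWith φ A B) (hA : 0 < A) :
    ‖((h.synthesisEquiv hA).symm : H →L[ℂ] ℓ²(ι, ℂ))‖ ≤ (√A)⁻¹ :=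
  ContinuousLinearMap.opNorm_le_bound _ (by positivity) fun f => by
    simpa [← synthesisEquiv_apply _ hA] using
      h.norm_le_inv_sqrt_mul_norm_synthesis hA ((h.synthesisEquiv hA).symm f)

theorem adjoint_synthesisEquiv_apply (h : IsRieszBasisWith φ A B) (hA : 0 < A)
    (f : H) (n : ι) : (h.synthesisEquiv hA).adjoint f n = ⟪φ n, f⟫_ℂ := by
  classical
  have hcoord : ⟪(lp.single 2 n (1 : ℂ) : ℓ²(ι, ℂ)), (h.synthesisEquiv hA).adjoint f⟫_ℂ =
      (h.synthesisEquiv hA).adjoint f n := by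
    simp [lp.inner_single_left]
  rw [← hcoord, ContinuousLinearEquiv.adjoint_apply, ContinuousLinearMap.adjoint_inner_right,
    ContinuousLinearEquiv.coe_coe, synthesisEquiv_apply, synthesis_single]

end IsRieszBasisWith

section Multiplier

variable [CompleteSpace H] {φ ψ : ι → H}

noncomputable def IsBesselWith.multiplier {Bφ Bψ : ℝ} (hφ : IsBesselWith φ Bφ)
    (hψ : IsBesselWith ψ Bψ) (w : ι → ℂ) (W : ℝ) (hW : ∀ n, ‖w n‖ ≤ W) : H →L[ℂ] H :=
  hφ.synthesis ∘L lp.diagonal w W hW ∘L hψ.analysis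

theorem IsBesselWith.hasSum_multiplier_apply {Bφ Bψ : ℝ} (hφ : IsBesselWith φ Bφ)
    (hψ : IsBesselWith ψ Bψ) {w : ι → ℂ} {W : ℝ} (hW : ∀ n, ‖w n‖ ≤ W) (f : H) :
    HasSum (fun n => (w n * ⟪ψ n, f⟫_ℂ) • φ n) (hφ.multiplier hψ w W hW f) :=
  hφ.hasSum_synthesis (lp.diagonal w W hW (hψ.analysis f))

theorem IsBesselWith.norm_multiplier_le {Bφ Bψ : ℝ} (hφ : IsBesselWith φ Bφ)
    (hψ : IsBesselWith ψ Bψ) {w : ι → ℂ} {W : ℝ} (hW : ∀ n, ‖w n‖ ≤ W) (hW0 : 0 ≤ W) :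
    ‖hφ.multiplier hψ w W hW‖ ≤ W * √Bφ * √Bψ :=
  calc _ ≤ ‖hφ.synthesis‖ * (‖(lp.diagonal w W hW : ℓ²(ι, ℂ) →L[ℂ] ℓ²(ι, ℂ))‖ * ‖hψ.analysis‖) :=
        (ContinuousLinearMap.opNorm_comp_le _ _).trans
          (mul_le_mul_of_nonneg_left (ContinuousLinearMap.opNorm_comp_le _ _) (norm_nonneg _))
    _ ≤ √Bφ * (W * √Bψ) := by
      gcongr
      exacts [hφ.norm_synthesis_le, lp.norm_diagonal_le hW0, hψ.norm_analysis_le]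
    _ = W * √Bφ * √Bψ := by ring

noncomputable def IsRieszBasisWith.multiplierEquiv {Aφ Bφ Aψ Bψ : ℝ}
    (hφ : IsRieszBasisWith φ Aφ Bφ) (hAφ : 0 < Aφ) (hψ : IsRieszBasisWith ψ Aψ Bψ) (hAψ : 0 < Aψ)
    (w : ι → ℂ) (W : ℝ) (hW : ∀ n, ‖w n‖ ≤ W) {d : ℝ} (hd : 0 < d) (hwd : ∀ n, d ≤ ‖w n‖) :
    H ≃L[ℂ] H :=
  ((hψ.synthesisEquiv hAψ).adjoint.trans (lp.diagonalEquiv w W hW hd hwd)).trans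
    (hφ.synthesisEquiv hAφ)

variable {Aφ Bφ Aψ Bψ : ℝ} {hφ : IsRieszBasisWith φ Aφ Bφ} {hAφ : 0 < Aφ}
  {hψ : IsRieszBasisWith ψ Aψ Bψ} {hAψ : 0 < Aψ} {w : ι → ℂ} {W : ℝ} {hW : ∀ n, ‖w n‖ ≤ W}
  {d : ℝ} {hd : 0 < d} {hwd : ∀ n, d ≤ ‖w n‖}

theorem IsRieszBasisWith.hasSum_multiplierEquiv_apply (f : H) :
    HasSum (fun n => (w n * ⟪ψ n, f⟫_ℂ) • φ n) (hφ.multiplierEquiv hAφ hψ hAψ w W hW hd hwd f) := by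
  have := hφ.hasSum_synthesis (lp.diagonalEquiv w W hW hd hwd ((hψ.synthesisEquiv hAψ).adjoint f))
  simp only [lp.diagonalEquiv_apply, hψ.adjoint_synthesisEquiv_apply] at this
  exact this

theorem IsRieszBasisWith.norm_multiplierEquiv_symm_le :
    ‖((hφ.multiplierEquiv hAφ hψ hAψ w W hW hd hwd).symm : H →L[ℂ] H)‖ ≤ (d * √Aφ * √Aψ)⁻¹ :=
  calc _ = ‖((hψ.synthesisEquiv hAψ).adjoint.symm : ℓ²(ι, ℂ) →L[ℂ] H) ∘L
          ((lp.diagonalEquiv (p := 2) w W hW hd hwd).symm : ℓ²(ι, ℂ) →L[ℂ] ℓ²(ι, ℂ)) ∘L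
          ((hφ.synthesisEquiv hAφ).symm : H →L[ℂ] ℓ²(ι, ℂ))‖ :=
      congrArg norm (ContinuousLinearMap.ext fun _ => rfl)
    _ ≤ ‖((hψ.synthesisEquiv hAψ).adjoint.symm : ℓ²(ι, ℂ) →L[ℂ] H)‖ *
          (‖((lp.diagonalEquiv (p := 2) w W hW hd hwd).symm : ℓ²(ι, ℂ) →L[ℂ] ℓ²(ι, ℂ))‖ *
            ‖((hφ.synthesisEquiv hAφ).symm : H →L[ℂ] ℓ²(ι, ℂ))‖) :=
      (ContinuousLinearMap.opNorm_comp_le _ _).trans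
        (mul_le_mul_of_nonneg_left (ContinuousLinearMap.opNorm_comp_le _ _) (norm_nonneg _))
    _ ≤ (√Aψ)⁻¹ * (d⁻¹ * (√Aφ)⁻¹) := by
      rw [ContinuousLinearEquiv.norm_adjoint_symm]
      gcongr
      exacts [hψ.norm_synthesisEquiv_symm_le hAψ, lp.norm_diagonalEquiv_symm_le hd hwd,
        hφ.norm_synthesisEquiv_symm_le hAφ]
    _ = (d * √Aφ * √Aψ)⁻¹ := by rw [mul_inv, mul_inv]; ring

end Multiplier

theorem hasSum_sub_smul_of_dual {φ ψ : ι → H}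
    (hdual : ∀ f : H, HasSum (fun n => ⟪ψ n, f⟫_ℂ • φ n) f) {m : ι → ℂ} {M : H → H}
    (hM : ∀ f : H, HasSum (fun n => (m n * ⟪ψ n, f⟫_ℂ) • φ n) (M f)) (lam : ℂ) (f : H) :
    HasSum (fun n => ((m n - lam) * ⟪ψ n, f⟫_ℂ) • φ n) (M f - lam • f) := by
  simpa only [sub_mul, sub_smul, mul_smul] using (hM f).sub ((hdual f).const_smul lam)

end Frames

theorem resolvent_dual_frames_multiplier_of_riesz_part_general
    {H : Type*} [NormedAddCommGroup H] [InnerProductSpace ℂ H] [CompleteSpace H]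
    (φ ψ : ℕ → H)
    (hdual : ∀ f : H, HasSum (fun n => ⟪ψ n, f⟫_ℂ • φ n) f)
    (I : Set ℕ)
    (Aφ1 Aψ1 Bφ2 Bψ2 : ℝ) (hAφ1 : 0 < Aφ1) (hAψ1 : 0 < Aψ1)
    (hφ1 : ∃ B1 : ℝ, IsRieszBasisWith (fun n : I => φ n) Aφ1 B1)
    (hψ1 : ∃ B1 : ℝ, IsRieszBasisWith (fun n : I => ψ n) Aψ1 B1)
    (hφ2 : IsBesselWith (fun n : {n : ℕ // n ∉ I} => φ n) Bφ2)
    (hψ2 : IsBesselWith (fun n : {n : ℕ // n ∉ I} => ψ n) Bψ2)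
    (m : ℕ → ℂ) (hm : ∃ C : ℝ, ∀ n, ‖m n‖ ≤ C)
    (M : H →L[ℂ] H)
    (hM : ∀ f : H, HasSum (fun n => (m n * ⟪ψ n, f⟫_ℂ) • φ n) (M f))
    (lam : ℂ)
    (hcond : (⨆ n : {n : ℕ // n ∉ I}, ‖m n - lam‖) * Real.sqrt Bφ2 * Real.sqrt Bψ2 <
      (⨅ n : I, ‖m n - lam‖) * Real.sqrt Aφ1 * Real.sqrt Aψ1) :
    lam ∈ resolventSet ℂ M := by
  obtain ⟨C, hC⟩ := hm
  obtain ⟨_, hRφ⟩ := hφ1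
  obtain ⟨_, hRψ⟩ := hψ1
  have hw (n : ℕ) : ‖m n - lam‖ ≤ C + ‖lam‖ := (norm_sub_le _ _).trans (by gcongr; exact hC n)
  have hsup (n : {n : ℕ // n ∉ I}) : ‖m n - lam‖ ≤ ⨆ n : {n : ℕ // n ∉ I}, ‖m n - lam‖ :=
    le_ciSup (f := fun n : {n : ℕ // n ∉ I} => ‖m n - lam‖)
      ⟨C + ‖lam‖, Set.forall_mem_range.mpr fun n => hw n⟩ n
  have hinf (n : I) : ⨅ n : I, ‖m n - lam‖ ≤ ‖m n - lam‖ :=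
    ciInf_le ⟨0, Set.forall_mem_range.mpr fun n => norm_nonneg _⟩ n
  have hsup0 : 0 ≤ ⨆ n : {n : ℕ // n ∉ I}, ‖m n - lam‖ := Real.iSup_nonneg fun n => norm_nonneg _
  have hK : 0 < (⨅ n : I, ‖m n - lam‖) * √Aφ1 * √Aψ1 := lt_of_le_of_lt (by positivity) hcond
  have hinf0 : 0 < ⨅ n : I, ‖m n - lam‖ :=
    pos_of_mul_pos_left (pos_of_mul_pos_left hK (Real.sqrt_nonneg _)) (Real.sqrt_nonneg _)
  let E := hRφ.multiplierEquiv hAφ1 hRψ hAψ1 (fun n : I => m n - lam) _ (fun n => hw n) hinf0 hinf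
  let M2 := hφ2.multiplier hψ2 (fun n : {n : ℕ // n ∉ I} => m n - lam) _ hsup
  have hsplit : M - lam • 1 = (E : H →L[ℂ] H) + M2 := ContinuousLinearMap.ext fun f =>
    (hasSum_sub_smul_of_dual hdual hM lam f).unique
      ((hRφ.hasSum_multiplierEquiv_apply f).add_compl (hφ2.hasSum_multiplier_apply hψ2 hsup f))
  rw [spectrum.mem_resolventSet_iff, Algebra.algebraMap_eq_smul_one, ← neg_sub, hsplit]
  exact (isUnit_add_of_norm_inv_le E.toUnit hK hRφ.norm_multiplierEquiv_symm_le
    ((hφ2.norm_multiplier_le hψ2 hsup hsup0).trans_lt hcond)).neg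

/-- for dual frames `φ, ψ` containing Riesz bases indexed by `I`, if
`(sup_{n∉I}|m n − λ|)·Bφ2^(1/2)·Bψ2^(1/2) < (inf_{n∈I}|m n − λ|)·Aφ1^(1/2)·Aψ1^(1/2)`,
then `λ` is in the resolvent set of `M_{m,φ,ψ}`. -/
theorem resolvent_dual_frames_multiplier_of_riesz_part
    {H : Type*} [NormedAddCommGroup H] [InnerProductSpace ℂ H] [CompleteSpace H]
    (φ ψ : ℕ → H)
    (hφframe : ∃ A B : ℝ, 0 < A ∧ IsFrameWith φ A B)
    (hψframe : ∃ A B : ℝ, 0 < A ∧ IsFrameWith ψ A B)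
    (hdual : ∀ f : H, HasSum (fun n => ⟪ψ n, f⟫_ℂ • φ n) f)
    (I : Set ℕ)
    (Aφ1 Aψ1 Bφ2 Bψ2 : ℝ) (hAφ1 : 0 < Aφ1) (hAψ1 : 0 < Aψ1)
    (hφ1 : ∃ B1 : ℝ, IsRieszBasisWith (fun n : I => φ n) Aφ1 B1)
    (hψ1 : ∃ B1 : ℝ, IsRieszBasisWith (fun n : I => ψ n) Aψ1 B1)
    (hφ2 : IsBesselWith (fun n : {n : ℕ // n ∉ I} => φ n) Bφ2)
    (hψ2 : IsBesselWith (fun n : {n : ℕ // n ∉ I} => ψ n) Bψ2)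
    (m : ℕ → ℂ) (hm : ∃ C : ℝ, ∀ n, ‖m n‖ ≤ C)
    (M : H →L[ℂ] H)
    (hM : ∀ f : H, HasSum (fun n => (m n * ⟪ψ n, f⟫_ℂ) • φ n) (M f))
    (lam : ℂ)
    (hcond : (⨆ n : {n : ℕ // n ∉ I}, ‖m n - lam‖) * Real.sqrt Bφ2 * Real.sqrt Bψ2 <
      (⨅ n : I, ‖m n - lam‖) * Real.sqrt Aφ1 * Real.sqrt Aψ1) :
    lam ∈ resolventSet ℂ M :=
  resolvent_dual_frames_multiplier_of_riesz_part_general φ ψ hdual I Aφ1 Aψ1 Bφ2 Bψ2 hAφ1 hAψ1 hφ1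
    hψ1 hφ2 hψ2 m hm M hM lam hcond
end

section
/- Let {e_n} and {f_n} be orthonormal bases of H, let φ be the interleaved Parseval frame φ_{2n−1} = (1/√2) e_n, φ_{2n} = (1/√2) f_n, and let m be the sequence m_{2n−1} = 1/(n+1), m_{2n} = 2 − 1/(n+1) for n ≥ 1. Then the spectrum of M_{m,φ,φ} is contained in [3/4, 5/4]; in particular M_{m,φ,φ} is boundedly invertible. -/
/-! The quadratic form of the multiplier is `re ⟪M g, g⟫ = ∑ₙ re mₙ ‖⟪φₙ, g⟫‖²`, and `M` is
self-adjoint because `m` is real. Splitting the sum into the `e`-block and the `f`-block and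
applying Parseval to each, the first contributes between `0` and `‖g‖² / 4`, the second between
`3‖g‖² / 4` and `‖g‖²`. So `3/4 ≤ M ≤ 5/4` in the Loewner order, which confines the spectrum of the
self-adjoint operator `M` to `[3/4, 5/4]`, away from `0`. -/

open scoped InnerProductSpace

open RCLike Set ComplexConjugate

section Multiplier

variable {ι 𝕜 E : Type*} [RCLike 𝕜] [NormedAddCommGroup E] [InnerProductSpace 𝕜 E]

theorem HilbertBasis.hasSum_norm_inner_sq [CompleteSpace E] (b : HilbertBasis ι 𝕜 E) (x : E) :
    HasSum (fun i => ‖⟪b i, x⟫_𝕜‖ ^ 2) (‖x‖ ^ 2) := by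
  simpa [b.repr_apply_apply] using lp.hasSum_norm (p := 2) (by norm_num) (b.repr x)

theorem HilbertBasis.summable_mul_norm_inner_sq [CompleteSpace E] (b : HilbertBasis ι 𝕜 E)
    {w : ι → ℝ} {a c : ℝ} (hw : ∀ i, w i ∈ Icc a c) (x : E) :
    Summable (fun i => w i * ‖⟪b i, x⟫_𝕜‖ ^ 2) := by
  refine .of_norm_bounded ((b.hasSum_norm_inner_sq x).summable.mul_left (max |a| |c|)) fun i => ?_
  rw [norm_mul, norm_pow, norm_norm, Real.norm_eq_abs]
  gcongr
  exact abs_le_max_abs_abs (hw i).1 (hw i).2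

theorem HilbertBasis.tsum_mul_norm_inner_sq_mem_Icc [CompleteSpace E] (b : HilbertBasis ι 𝕜 E)
    {w : ι → ℝ} {a c : ℝ} (hw : ∀ i, w i ∈ Icc a c) (x : E) :
    ∑' i, w i * ‖⟪b i, x⟫_𝕜‖ ^ 2 ∈ Icc (a * ‖x‖ ^ 2) (c * ‖x‖ ^ 2) := by
  have hP := b.hasSum_norm_inner_sq x
  have hs := (b.summable_mul_norm_inner_sq hw x).hasSum
  exact ⟨hasSum_le (fun i => by gcongr; exact (hw i).1) (hP.mul_left a) hs,
    hasSum_le (fun i => by gcongr; exact (hw i).2) hs (hP.mul_left c)⟩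

theorem norm_inner_smul_left_sq (α : 𝕜) (v g : E) :
    ‖⟪α • v, g⟫_𝕜‖ ^ 2 = ‖α‖ ^ 2 * ‖⟪v, g⟫_𝕜‖ ^ 2 := by
  rw [inner_smul_left, norm_mul, RCLike.norm_conj, mul_pow]

theorem hasSum_re_inner_multiplier {φ : ι → E} {m : ι → 𝕜} {T : E →L[𝕜] E} {g : E}
    (hT : HasSum (fun i => (m i * ⟪φ i, g⟫_𝕜) • φ i) (T g)) :
    HasSum (fun i => re (m i) * ‖⟪φ i, g⟫_𝕜‖ ^ 2) (re ⟪T g, g⟫_𝕜) := by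
  refine (reCLM.hasSum ((innerSLFlip 𝕜 g).hasSum hT)).congr_fun fun i => ?_
  rw [reCLM_apply, innerSLFlip_apply_apply, inner_smul_left, map_mul (starRingEnd 𝕜), mul_assoc,
    RCLike.conj_mul, ← ofReal_pow, re_mul_ofReal, conj_re]

theorem isSelfAdjoint_of_hasSum_multiplier [CompleteSpace E] {φ : ι → E} {m : ι → 𝕜}
    (hm : ∀ i, conj (m i) = m i) {T : E →L[𝕜] E}
    (hT : ∀ g, HasSum (fun i => (m i * ⟪φ i, g⟫_𝕜) • φ i) (T g)) :
    IsSelfAdjoint T := by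
  refine ContinuousLinearMap.isSelfAdjoint_iff_isSymmetric.mpr fun x y =>
    ((innerSLFlip 𝕜 y).hasSum (hT x)).unique (((innerSL 𝕜 x).hasSum (hT y)).congr_fun fun i => ?_)
  simp only [innerSLFlip_apply_apply, innerSL_apply_apply, inner_smul_left, inner_smul_right,
    map_mul, hm, inner_conj_symm]
  ring

theorem mem_Icc_of_hasSum_interleave [CompleteSpace E] (e f : HilbertBasis ℕ 𝕜 E) {φ : ℕ → E}
    {α β : 𝕜} (hφe : ∀ n, φ (2 * n) = α • e n) (hφf : ∀ n, φ (2 * n + 1) = β • f n)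
    {w : ℕ → ℝ} {a₁ c₁ a₂ c₂ : ℝ} (hwe : ∀ n, w (2 * n) ∈ Icc a₁ c₁)
    (hwf : ∀ n, w (2 * n + 1) ∈ Icc a₂ c₂) {x : E} {s : ℝ}
    (hs : HasSum (fun n => w n * ‖⟪φ n, x⟫_𝕜‖ ^ 2) s) :
    s ∈ Icc ((‖α‖ ^ 2 * a₁ + ‖β‖ ^ 2 * a₂) * ‖x‖ ^ 2)
      ((‖α‖ ^ 2 * c₁ + ‖β‖ ^ 2 * c₂) * ‖x‖ ^ 2) := by
  have scale : ∀ (γ : 𝕜) {v : ℕ → ℝ} {a c : ℝ}, (∀ n, v n ∈ Icc a c) →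
      ∀ n, ‖γ‖ ^ 2 * v n ∈ Icc (‖γ‖ ^ 2 * a) (‖γ‖ ^ 2 * c) := fun γ _ _ _ hv n =>
    ⟨by gcongr; exact (hv n).1, by gcongr; exact (hv n).2⟩
  have heven : (fun n => w (2 * n) * ‖⟪φ (2 * n), x⟫_𝕜‖ ^ 2) =
      fun n => ‖α‖ ^ 2 * w (2 * n) * ‖⟪e n, x⟫_𝕜‖ ^ 2 := by
    funext n; rw [hφe, norm_inner_smul_left_sq]; ring
  have hodd : (fun n => w (2 * n + 1) * ‖⟪φ (2 * n + 1), x⟫_𝕜‖ ^ 2) =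
      fun n => ‖β‖ ^ 2 * w (2 * n + 1) * ‖⟪f n, x⟫_𝕜‖ ^ 2 := by
    funext n; rw [hφf, norm_inner_smul_left_sq]; ring
  have hsplit := tsum_even_add_odd (f := fun n => w n * ‖⟪φ n, x⟫_𝕜‖ ^ 2)
    (heven ▸ e.summable_mul_norm_inner_sq (scale α hwe) x)
    (hodd ▸ f.summable_mul_norm_inner_sq (scale β hwf) x)
  rw [heven, hodd, hs.tsum_eq] at hsplit
  have he := e.tsum_mul_norm_inner_sq_mem_Icc (scale α hwe) x
  have hf := f.tsum_mul_norm_inner_sq_mem_Icc (scale β hwf) x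
  rw [← hsplit, add_mul, add_mul]
  exact ⟨add_le_add he.1 hf.1, add_le_add he.2 hf.2⟩

end Multiplier

section Loewner

variable {E : Type*} [NormedAddCommGroup E] [InnerProductSpace ℂ E]

theorem re_inner_algebraMap_apply_self (r : ℝ) (x : E) :
    re ⟪algebraMap ℝ (E →L[ℂ] E) r x, x⟫_ℂ = r * ‖x‖ ^ 2 := by
  rw [ContinuousLinearMap.algebraMap_apply, real_smul_eq_coe_smul (K := ℂ), inner_smul_real_left,
    smul_re, inner_self_eq_norm_sq]

variable [CompleteSpace E]

theorem algebraMap_le_of_forall_le_re_inner {T : E →L[ℂ] E} (hT : IsSelfAdjoint T) {a : ℝ}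
    (h : ∀ x, a * ‖x‖ ^ 2 ≤ re ⟪T x, x⟫_ℂ) : algebraMap ℝ (E →L[ℂ] E) a ≤ T := by
  refine ContinuousLinearMap.isPositive_def'.mpr ⟨hT.sub (.algebraMap _ (.all a)), fun x => ?_⟩
  rw [ContinuousLinearMap.reApplyInnerSelf_apply, sub_apply, inner_sub_left,
    map_sub, re_inner_algebraMap_apply_self]
  linarith [h x]

theorem le_algebraMap_of_forall_re_inner_le {T : E →L[ℂ] E} (hT : IsSelfAdjoint T) {c : ℝ}
    (h : ∀ x, re ⟪T x, x⟫_ℂ ≤ c * ‖x‖ ^ 2) : T ≤ algebraMap ℝ (E →L[ℂ] E) c := by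
  refine ContinuousLinearMap.isPositive_def'.mpr
    ⟨(IsSelfAdjoint.algebraMap _ (.all c)).sub hT, fun x => ?_⟩
  rw [ContinuousLinearMap.reApplyInnerSelf_apply, sub_apply, inner_sub_left,
    map_sub, re_inner_algebraMap_apply_self]
  linarith [h x]

theorem IsSelfAdjoint.spectrum_subset_image_Icc {T : E →L[ℂ] E} (hT : IsSelfAdjoint T) {a c : ℝ}
    (h : ∀ x, re ⟪T x, x⟫_ℂ ∈ Icc (a * ‖x‖ ^ 2) (c * ‖x‖ ^ 2)) :
    spectrum ℂ T ⊆ (fun r : ℝ => (r : ℂ)) '' Icc a c := by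
  have ha := (algebraMap_le_iff_le_spectrum hT).mp
    (algebraMap_le_of_forall_le_re_inner hT fun x => (h x).1)
  have hc := (le_algebraMap_iff_spectrum_le hT).mp
    (le_algebraMap_of_forall_re_inner_le hT fun x => (h x).2)
  rw [← hT.spectrumRestricts.algebraMap_image]
  rintro _ ⟨r, hr, rfl⟩
  exact ⟨r, ⟨ha r hr, hc r hr⟩, rfl⟩

end Loewner

theorem inv_natCast_add_two_mem_Icc (n : ℕ) : ((n : ℝ) + 2)⁻¹ ∈ Icc 0 (1 / 2) :=
  ⟨by positivity, by rw [one_div]; exact inv_anti₀ two_pos (by linarith [n.cast_nonneg (α := ℝ)])⟩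

/-- for the interleaving `φ` of two orthonormal bases scaled by `1/√2` and
the symbol `m` with `m` on the `e`-block equal to `1/(n+1)` and on the `f`-block equal to
`2 − 1/(n+1)` (`n ≥ 1`), the spectrum of `M_{m,φ,φ}` is contained in `[3/4, 5/4]`; in
particular `M_{m,φ,φ}` is boundedly invertible. -/
theorem spectrum_multiplier_interleaved_invertible
    {H : Type*} [NormedAddCommGroup H] [InnerProductSpace ℂ H] [CompleteSpace H]
    (e f : HilbertBasis ℕ ℂ H)
    (φ : ℕ → H)
    (hφe : ∀ n : ℕ, φ (2 * n) = ((Real.sqrt 2)⁻¹ : ℂ) • e n)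
    (hφf : ∀ n : ℕ, φ (2 * n + 1) = ((Real.sqrt 2)⁻¹ : ℂ) • f n)
    (m : ℕ → ℂ)
    (hm : ∀ n : ℕ, m (2 * n) = ((n : ℂ) + 2)⁻¹ ∧ m (2 * n + 1) = 2 - ((n : ℂ) + 2)⁻¹)
    (M : H →L[ℂ] H)
    (hM : ∀ g : H, HasSum (fun n => (m n * ⟪φ n, g⟫_ℂ) • φ n) (M g)) :
    spectrum ℂ M ⊆ (fun r : ℝ => (r : ℂ)) '' Set.Icc (3 / 4) (5 / 4) ∧
    IsUnit M := by
  have hm_real : ∀ n : ℕ, m (2 * n) = (((n : ℝ) + 2)⁻¹ : ℝ) ∧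
      m (2 * n + 1) = ((2 - ((n : ℝ) + 2)⁻¹ : ℝ) : ℂ) := fun n => by push_cast; exact hm n
  have hm_even : ∀ n, re (m (2 * n)) ∈ Icc 0 (1 / 2) := fun n => by
    simpa only [(hm_real n).1, re_to_complex, Complex.ofReal_re] using inv_natCast_add_two_mem_Icc n
  have hm_odd : ∀ n, re (m (2 * n + 1)) ∈ Icc (3 / 2) 2 := fun n => by
    obtain ⟨h0, h1⟩ := inv_natCast_add_two_mem_Icc n
    rw [(hm_real n).2, re_to_complex, Complex.ofReal_re]
    constructor <;> linarith
  have hM_sa : IsSelfAdjoint M := by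
    refine isSelfAdjoint_of_hasSum_multiplier (fun n => ?_) hM
    obtain ⟨k, rfl | rfl⟩ := n.even_or_odd'
    · rw [(hm_real k).1, Complex.conj_ofReal]
    · rw [(hm_real k).2, Complex.conj_ofReal]
  have hα : ‖((Real.sqrt 2)⁻¹ : ℂ)‖ ^ 2 = 1 / 2 := by
    rw [norm_inv, inv_pow, Complex.norm_real, Real.norm_eq_abs, sq_abs, Real.sq_sqrt zero_le_two,
      one_div]
  have hM_bounds : ∀ g, re ⟪M g, g⟫_ℂ ∈ Icc (3 / 4 * ‖g‖ ^ 2) (5 / 4 * ‖g‖ ^ 2) := fun g => by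
    convert mem_Icc_of_hasSum_interleave e f hφe hφf hm_even hm_odd
      (hasSum_re_inner_multiplier (hM g)) using 3 <;> rw [hα] <;> norm_num
  have hspec := hM_sa.spectrum_subset_image_Icc hM_bounds
  refine ⟨hspec, (spectrum.zero_notMem_iff ℂ).mp fun h0 => ?_⟩
  obtain ⟨r, hr, hr0⟩ := hspec h0
  rw [Complex.ofReal_eq_zero] at hr0
  norm_num [hr0] at hr
end
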